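/- arXiv:1706.08892 — 2 statements merged into one kernel-verified Lean document; each statement's English description precedes it below -/
import Mathlib

section
/- Let a, γ : [0,∞) → ℝ be continuous and bounded above and below by positive constants, let k > 0, and let p : [0,∞) → ℝ be a positive bounded differentiable solution of z'(t) = a(t)z(t) − z(t)² − kγ(t). Assume I := ∫₀^∞ exp(∫₀^t (a(s) − 2p(s)) ds) dt = ∞. Then every differentiable solution z : [0,∞) → ℝ of the same equation with z(0) > p(0) is bounded on [0,∞) and separated from p: z(t) > p(t) for all t ≥ 0 and ∫₀^∞ (z(t) − p(t)) dt = ∞. -/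
open Real Filter MeasureTheory Set intervalIntegral

/-! For `w = z - p` and `b = a - 2p` the equation gives `w' = (b - w) w`, so
`w t * exp (∫₀ᵗ w - ∫₀ᵗ b)` is constant. Hence `w` keeps the sign of `w 0`, and
`(exp ∫₀ᵗ w)' = w 0 * exp ∫₀ᵗ b`, i.e. `exp ∫₀ᵗ w = 1 + w 0 * ∫₀ᵗ exp ∫₀ˢ b`, which tends to `∞`
because `I = ∞`. For the bound: at a level `M > max (z 0) (sup a) > 0` the equation gives
`z' = M (a - M) - k γ < 0`, so `z` never crosses `M`. -/

section Ici

variable {f g f' : ℝ → ℝ} {a M : ℝ}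

theorem hasDerivWithinAt_integral_Ici (hf : ContinuousOn f (Ici a)) {x : ℝ} (hx : a ≤ x) :
    HasDerivWithinAt (fun t => ∫ s in a..t, f s) (f x) (Ici a) x := by
  have : Fact (x ∈ Icc a (x + 1)) := ⟨⟨hx, by linarith⟩⟩
  have hIcc : ContinuousOn f (Icc a (x + 1)) := hf.mono Icc_subset_Ici_self
  have h := integral_hasDerivWithinAt_right (s := Icc a (x + 1)) (t := Icc a (x + 1))
    (ContinuousOn.intervalIntegrable_of_Icc hx (hIcc.mono (Icc_subset_Icc_right (by linarith))))
    (hIcc.stronglyMeasurableAtFilter_nhdsWithin measurableSet_Icc x) (hIcc x this.out)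
  rwa [← Ici_inter_Iic, hasDerivWithinAt_inter (Iic_mem_nhds (by linarith))] at h

theorem continuousOn_Ici_of_hasDerivWithinAt (hf : ∀ x ≥ a, HasDerivWithinAt f (f' x) (Ici a) x) :
    ContinuousOn f (Ici a) := fun x hx => (hf x hx).continuousWithinAt

theorem eq_of_hasDerivWithinAt_Ici_zero (hg : ∀ x ≥ a, HasDerivWithinAt g 0 (Ici a) x) :
    ∀ x ≥ a, g x = g a := fun x hx =>
  constant_of_has_deriv_right_zero
    ((continuousOn_Ici_of_hasDerivWithinAt hg).mono Icc_subset_Ici_self)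
    (fun y hy => (hg y hy.1).mono (Ici_subset_Ici.2 hy.1)) x ⟨hx, le_rfl⟩

theorem le_of_hasDerivWithinAt_Ici_of_deriv_neg
    (hf : ∀ x ≥ a, HasDerivWithinAt f (f' x) (Ici a) x) (ha : f a ≤ M)
    (bound : ∀ x ≥ a, f x = M → f' x < 0) : ∀ x ≥ a, f x ≤ M := fun _ hx =>
  image_le_of_deriv_right_lt_deriv_boundary (B := fun _ => M)
    ((continuousOn_Ici_of_hasDerivWithinAt hf).mono Icc_subset_Ici_self)
    (fun y hy => (hf y hy.1).mono (Ici_subset_Ici.2 hy.1)) ha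
    (fun _ => hasDerivAt_const _ M) (fun y hy => bound y hy.1) ⟨hx, le_rfl⟩

end Ici

section Riccati

variable {a h z p : ℝ → ℝ}

theorem riccati_le_of_forall_lt {M : ℝ} (hM : 0 < M) (haM : ∀ t ≥ (0:ℝ), a t < M)
    (hh : ∀ t ≥ (0:ℝ), 0 ≤ h t)
    (hz : ∀ t ≥ (0:ℝ), HasDerivWithinAt z (a t * z t - z t ^ 2 - h t) (Ici 0) t)
    (hz0 : z 0 ≤ M) : ∀ t ≥ (0:ℝ), z t ≤ M :=
  le_of_hasDerivWithinAt_Ici_of_deriv_neg hz hz0 fun t ht hzt => by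
    rw [hzt]
    nlinarith [haM t ht, hh t ht]

variable (ha : ContinuousOn a (Ici 0))
    (hz : ∀ t ≥ (0:ℝ), HasDerivWithinAt z (a t * z t - z t ^ 2 - h t) (Ici 0) t)
    (hp : ∀ t ≥ (0:ℝ), HasDerivWithinAt p (a t * p t - p t ^ 2 - h t) (Ici 0) t)
include ha hz hp

theorem riccati_sub_mul_exp_eq (t : ℝ) (ht : 0 ≤ t) :
    (z t - p t) * exp ((∫ s in (0:ℝ)..t, z s - p s) - ∫ s in (0:ℝ)..t, a s - 2 * p s) =
      z 0 - p 0 := by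
  have hzc := continuousOn_Ici_of_hasDerivWithinAt hz
  have hpc := continuousOn_Ici_of_hasDerivWithinAt hp
  have hb : ContinuousOn (fun s => a s - 2 * p s) (Ici 0) := by fun_prop
  have hderiv : ∀ x ≥ (0:ℝ), HasDerivWithinAt (fun t => (z t - p t) *
      exp ((∫ s in (0:ℝ)..t, z s - p s) - ∫ s in (0:ℝ)..t, a s - 2 * p s)) 0 (Ici 0) x := by
    intro x hx
    refine (((hz x hx).sub (hp x hx)).mul
      ((hasDerivWithinAt_integral_Ici (hzc.sub hpc) hx).sub
        (hasDerivWithinAt_integral_Ici hb hx)).exp).congr_deriv ?_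
    simp only [Pi.sub_apply]
    ring
  simpa using eq_of_hasDerivWithinAt_Ici_zero hderiv t ht

theorem exp_integral_riccati_sub_eq (t : ℝ) (ht : 0 ≤ t) :
    exp (∫ s in (0:ℝ)..t, z s - p s) =
      1 + (z 0 - p 0) * ∫ s in (0:ℝ)..t, exp (∫ r in (0:ℝ)..s, a r - 2 * p r) := by
  have hzc := continuousOn_Ici_of_hasDerivWithinAt hz
  have hpc := continuousOn_Ici_of_hasDerivWithinAt hp
  have hb : ContinuousOn (fun s => a s - 2 * p s) (Ici 0) := by fun_prop
  have hE : ContinuousOn (fun s => exp (∫ r in (0:ℝ)..s, a r - 2 * p r)) (Ici 0) :=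
    (continuousOn_Ici_of_hasDerivWithinAt fun x hx => hasDerivWithinAt_integral_Ici hb hx).rexp
  have hderiv : ∀ x ≥ (0:ℝ), HasDerivWithinAt (fun t => exp (∫ s in (0:ℝ)..t, z s - p s) -
      (z 0 - p 0) * ∫ s in (0:ℝ)..t, exp (∫ r in (0:ℝ)..s, a r - 2 * p r)) 0 (Ici 0) x := by
    intro x hx
    refine ((hasDerivWithinAt_integral_Ici (hzc.sub hpc) hx).exp.sub
      ((hasDerivWithinAt_integral_Ici hE hx).const_mul _)).congr_deriv ?_
    simp only [Pi.sub_apply]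
    rw [← riccati_sub_mul_exp_eq ha hz hp x hx, exp_sub]
    field_simp
    ring
  have := eq_of_hasDerivWithinAt_Ici_zero hderiv t ht
  simp only [integral_same, exp_zero, mul_zero, sub_zero] at this
  linarith

theorem riccati_lt_of_lt (hzp0 : p 0 < z 0) (t : ℝ) (ht : 0 ≤ t) : p t < z t := by
  have h := riccati_sub_mul_exp_eq ha hz hp t ht
  exact sub_pos.1 ((mul_pos_iff_of_pos_right (exp_pos _)).1 (h ▸ sub_pos.2 hzp0))

end Riccati

theorem stmt12_general (a γ p : ℝ → ℝ) (k a₁ a₂ γ₁ γ₂ : ℝ)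
    (ha : ContinuousOn a (Set.Ici (0:ℝ)))
    (hγ₁ : 0 < γ₁)
    (haB : ∀ t ≥ (0:ℝ), a₁ ≤ a t ∧ a t ≤ a₂)
    (hγB : ∀ t ≥ (0:ℝ), γ₁ ≤ γ t ∧ γ t ≤ γ₂)
    (hk : 0 < k)
    (hp : ∀ t ≥ (0:ℝ), HasDerivWithinAt p (a t * p t - p t ^ 2 - k * γ t) (Set.Ici (0:ℝ)) t)
    (hppos : ∀ t ≥ (0:ℝ), 0 < p t)
    (hI : Tendsto (fun S => ∫ t in (0:ℝ)..S, Real.exp (∫ s in (0:ℝ)..t, a s - 2 * p s))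
      atTop atTop) :
    ∀ z : ℝ → ℝ,
      (∀ t ≥ (0:ℝ), HasDerivWithinAt z (a t * z t - z t ^ 2 - k * γ t) (Set.Ici (0:ℝ)) t) →
      z 0 > p 0 →
      (∃ M : ℝ, ∀ t ≥ (0:ℝ), |z t| ≤ M) ∧
      (∀ t ≥ (0:ℝ), z t > p t) ∧
      Tendsto (fun S => ∫ t in (0:ℝ)..S, z t - p t) atTop atTop := by
  intro z hz hz0
  have hzp : ∀ t ≥ (0:ℝ), z t > p t := riccati_lt_of_lt (h := fun s => k * γ s) ha hz hp hz0
  refine ⟨⟨max (z 0) a₂ + 1, fun t ht => ?_⟩, hzp, ?_⟩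
  · have hz_le := riccati_le_of_forall_lt (h := fun s => k * γ s) (M := max (z 0) a₂ + 1)
      (by linarith [le_max_left (z 0) a₂, hppos 0 le_rfl])
      (fun s hs => by linarith [(haB s hs).2, le_max_right (z 0) a₂])
      (fun s hs => mul_nonneg hk.le (hγ₁.le.trans (hγB s hs).1)) hz
      (by linarith [le_max_left (z 0) a₂]) t ht
    rw [abs_le]
    constructor <;> linarith [hppos t ht, hzp t ht]
  · have hF := tendsto_atTop_add_const_left _ 1 (hI.const_mul_atTop (sub_pos.2 hz0))
    refine (tendsto_log_atTop.comp hF).congr' ?_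
    filter_upwards [eventually_ge_atTop 0] with S hS
    rw [Function.comp_apply, ← exp_integral_riccati_sub_eq ha hz hp S hS, log_exp]

theorem stmt12 (a γ p : ℝ → ℝ) (k a₁ a₂ γ₁ γ₂ : ℝ)
    (ha : ContinuousOn a (Set.Ici (0:ℝ)))
    (hγ : ContinuousOn γ (Set.Ici (0:ℝ)))
    (ha₁ : 0 < a₁) (hγ₁ : 0 < γ₁)
    (haB : ∀ t ≥ (0:ℝ), a₁ ≤ a t ∧ a t ≤ a₂)
    (hγB : ∀ t ≥ (0:ℝ), γ₁ ≤ γ t ∧ γ t ≤ γ₂)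
    (hk : 0 < k)
    (hp : ∀ t ≥ (0:ℝ), HasDerivWithinAt p (a t * p t - p t ^ 2 - k * γ t) (Set.Ici (0:ℝ)) t)
    (hppos : ∀ t ≥ (0:ℝ), 0 < p t)
    (hpbd : ∃ M : ℝ, ∀ t ≥ (0:ℝ), |p t| ≤ M)
    (hI : Tendsto (fun S => ∫ t in (0:ℝ)..S, Real.exp (∫ s in (0:ℝ)..t, a s - 2 * p s))
      atTop atTop) :
    ∀ z : ℝ → ℝ,
      (∀ t ≥ (0:ℝ), HasDerivWithinAt z (a t * z t - z t ^ 2 - k * γ t) (Set.Ici (0:ℝ)) t) →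
      z 0 > p 0 →
      (∃ M : ℝ, ∀ t ≥ (0:ℝ), |z t| ≤ M) ∧
      (∀ t ≥ (0:ℝ), z t > p t) ∧
      Tendsto (fun S => ∫ t in (0:ℝ)..S, z t - p t) atTop atTop :=
  stmt12_general a γ p k a₁ a₂ γ₁ γ₂ ha hγ₁ haB hγB hk hp hppos hI
end

section
/- Let a, γ : [0,∞) → ℝ be continuous and bounded above and below by positive constants, let k > 0, and let p : [0,∞) → ℝ be a positive bounded differentiable solution of z'(t) = a(t)z(t) − z(t)² − kγ(t). Assume I := ∫₀^∞ exp(∫₀^t (a(s) − 2p(s)) ds) dt = ∞. Then there is no differentiable solution z : [0,∞) → ℝ of the same equation with z(0) < p(0); that is, every solution starting below p goes to −∞ in finite time. -/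
/-!
Put `w = p - z` and `q = a - 2p`. Then `w' = q w + w²` (the harvesting terms cancel), a Bernoulli
equation. With `E = exp (∫ q)` and `c = 1 / w(0)`, both `w` and `E - w (c - ∫ E)` solve the linear
equation `u' = (q + w) u`. Hence `w` stays positive, and the second function, which vanishes at `0`,
vanishes identically: `E = w (c - ∫ E)`, so `∫₀^T E < c` for all `T`, contradicting `I = ∞`.
-/

open Real Filter MeasureTheory Set intervalIntegral

section LinearODE

variable {t₀ : ℝ}

theorem hasDerivWithinAt_integral_of_continuousOn_Ici {f : ℝ → ℝ} (hf : ContinuousOn f (Ici t₀))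
    {t : ℝ} (ht : t₀ ≤ t) :
    HasDerivWithinAt (fun u => ∫ x in t₀..u, f x) (f t) (Ici t₀) t := by
  have : Fact (t ∈ Icc t₀ (t + 1)) := ⟨⟨ht, by linarith⟩⟩
  have hsub : Icc t₀ (t + 1) ⊆ Ici t₀ := Icc_subset_Ici_self
  have hderiv := integral_hasDerivWithinAt_right (s := Icc t₀ (t + 1)) (t := Icc t₀ (t + 1))
    ((hf.mono Icc_subset_Ici_self).intervalIntegrable_of_Icc ht)
    ((hf.mono hsub).stronglyMeasurableAtFilter_nhdsWithin measurableSet_Icc t)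
    ((hf t ht).mono hsub)
  refine hderiv.mono_of_mem_nhdsWithin ?_
  rw [← Ici_inter_Iic]
  exact inter_mem_nhdsWithin _ (Iic_mem_nhds (by linarith))

theorem eq_of_hasDerivWithinAt_Ici_zero_s13 {f : ℝ → ℝ}
    (hf : ∀ t ≥ t₀, HasDerivWithinAt f 0 (Ici t₀) t) : ∀ t ≥ t₀, f t = f t₀ := fun T hT =>
  constant_of_has_deriv_right_zero
    (fun t ht => (hf t ht.1).continuousWithinAt.mono Icc_subset_Ici_self)
    (fun t ht => (hf t ht.1).mono (Ici_subset_Ici.2 ht.1)) T (right_mem_Icc.2 hT)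

/-- The integrating factor `exp (-∫ g)` makes `u` constant. -/
theorem eq_mul_exp_integral_of_hasDerivWithinAt {g u : ℝ → ℝ} (hg : ContinuousOn g (Ici t₀))
    (hu : ∀ t ≥ t₀, HasDerivWithinAt u (g t * u t) (Ici t₀) t) :
    ∀ t ≥ t₀, u t = u t₀ * exp (∫ s in t₀..t, g s) := by
  have hconst := eq_of_hasDerivWithinAt_Ici_zero_s13 (t₀ := t₀)
    (f := fun t => u t * exp (-∫ s in t₀..t, g s)) fun t ht =>
      ((hu t ht).mul (hasDerivWithinAt_integral_of_continuousOn_Ici hg ht).neg.exp).congr_deriv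
        (by ring)
  intro t ht
  have h := hconst t ht
  simp only [integral_same, neg_zero, exp_zero, mul_one] at h
  rw [← h, mul_assoc, ← exp_add, neg_add_cancel, exp_zero, mul_one]

end LinearODE

section Bernoulli

variable {t₀ : ℝ} {q w : ℝ → ℝ} (hq : ContinuousOn q (Ici t₀))
  (hw : ∀ t ≥ t₀, HasDerivWithinAt w (q t * w t + w t ^ 2) (Ici t₀) t)
include hq hw

theorem bernoulli_pos (h0 : 0 < w t₀) : ∀ t ≥ t₀, 0 < w t := by
  have hwc : ContinuousOn w (Ici t₀) := fun t ht => (hw t ht).continuousWithinAt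
  intro t ht
  rw [eq_mul_exp_integral_of_hasDerivWithinAt (hq.add hwc)
    (fun t ht => (hw t ht).congr_deriv (by simp only [Pi.add_apply]; ring)) t ht]
  positivity

theorem bernoulli_integral_exp_lt (h0 : 0 < w t₀) :
    ∀ T ≥ t₀, ∫ t in t₀..T, exp (∫ s in t₀..t, q s) < (w t₀)⁻¹ := by
  set E : ℝ → ℝ := fun t => exp (∫ s in t₀..t, q s)
  set c := (w t₀)⁻¹
  have hE : ∀ t ≥ t₀, HasDerivWithinAt E (E t * q t) (Ici t₀) t := fun t ht =>
    (hasDerivWithinAt_integral_of_continuousOn_Ici hq ht).exp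
  have hEc : ContinuousOn E (Ici t₀) := fun t ht => (hE t ht).continuousWithinAt
  have hwc : ContinuousOn w (Ici t₀) := fun t ht => (hw t ht).continuousWithinAt
  have hzero := eq_mul_exp_integral_of_hasDerivWithinAt (hq.add hwc)
    (u := fun t => E t - w t * (c - ∫ s in t₀..t, E s)) fun t ht =>
      ((hE t ht).sub ((hw t ht).mul
        ((hasDerivWithinAt_integral_of_continuousOn_Ici hEc ht).const_sub c))).congr_deriv
        (by simp only [Pi.add_apply]; ring)
  intro T hT
  have hT' := hzero T hT
  simp only [integral_same, sub_zero, E, exp_zero, c, mul_inv_cancel₀ h0.ne', sub_self,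
    zero_mul] at hT'
  have hprod : 0 < w T * (c - ∫ s in t₀..T, E s) := by
    rw [← sub_eq_zero.1 hT']
    positivity
  linarith [pos_of_mul_pos_right hprod (bernoulli_pos hq hw h0 T hT).le]

end Bernoulli

theorem stmt13_general (a γ p : ℝ → ℝ) (k : ℝ)
    (ha : ContinuousOn a (Set.Ici (0:ℝ)))
    (hp : ∀ t ≥ (0:ℝ), HasDerivWithinAt p (a t * p t - p t ^ 2 - k * γ t) (Set.Ici (0:ℝ)) t)
    (hI : Tendsto (fun S => ∫ t in (0:ℝ)..S, Real.exp (∫ s in (0:ℝ)..t, a s - 2 * p s))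
      atTop atTop) :
    ¬ ∃ z : ℝ → ℝ,
      (∀ t ≥ (0:ℝ), HasDerivWithinAt z (a t * z t - z t ^ 2 - k * γ t) (Set.Ici (0:ℝ)) t) ∧
      z 0 < p 0 := by
  rintro ⟨z, hz, hz0⟩
  have hq : ContinuousOn (fun t => a t - 2 * p t) (Ici 0) :=
    ha.sub (continuousOn_const.mul fun t ht => (hp t ht).continuousWithinAt)
  have hw : ∀ t ≥ (0:ℝ), HasDerivWithinAt (fun t => p t - z t)
      ((a t - 2 * p t) * (p t - z t) + (p t - z t) ^ 2) (Ici 0) t := fun t ht =>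
    ((hp t ht).sub (hz t ht)).congr_deriv (by ring)
  obtain ⟨T, hIT, hT⟩ :=
    ((hI.eventually_ge_atTop (p 0 - z 0)⁻¹).and (eventually_ge_atTop 0)).exists
  exact (bernoulli_integral_exp_lt hq hw (sub_pos.2 hz0) T hT).not_ge hIT

theorem stmt13 (a γ p : ℝ → ℝ) (k a₁ a₂ γ₁ γ₂ : ℝ)
    (ha : ContinuousOn a (Set.Ici (0:ℝ)))
    (hγ : ContinuousOn γ (Set.Ici (0:ℝ)))
    (ha₁ : 0 < a₁) (hγ₁ : 0 < γ₁)
    (haB : ∀ t ≥ (0:ℝ), a₁ ≤ a t ∧ a t ≤ a₂)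
    (hγB : ∀ t ≥ (0:ℝ), γ₁ ≤ γ t ∧ γ t ≤ γ₂)
    (hk : 0 < k)
    (hp : ∀ t ≥ (0:ℝ), HasDerivWithinAt p (a t * p t - p t ^ 2 - k * γ t) (Set.Ici (0:ℝ)) t)
    (hppos : ∀ t ≥ (0:ℝ), 0 < p t)
    (hpbd : ∃ M : ℝ, ∀ t ≥ (0:ℝ), |p t| ≤ M)
    (hI : Tendsto (fun S => ∫ t in (0:ℝ)..S, Real.exp (∫ s in (0:ℝ)..t, a s - 2 * p s))
      atTop atTop) :
    ¬ ∃ z : ℝ → ℝ,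
      (∀ t ≥ (0:ℝ), HasDerivWithinAt z (a t * z t - z t ^ 2 - k * γ t) (Set.Ici (0:ℝ)) t) ∧
      z 0 < p 0 :=
  stmt13_general a γ p k ha hp hI
end
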